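/- arXiv:1112.5649 — 4 statements merged into one kernel-verified Lean document; each statement's English description precedes it below -/
import Mathlib

section
/- The piecewise linear traffic flux satisfies Zhang's second anisotropy condition: for all 0 < ρ_l < ρ_r ≤ 1, min(f(ρ_l)/ρ_l, f(ρ_r)/ρ_r) ≥ (f(ρ_r) − f(ρ_l))/(ρ_r − ρ_l). -/
/-!
The secant slope of `f` over `[ρl, ρr]` lies below both slopes `f ρl / ρl` and `f ρr / ρr` of the
chords from the origin exactly when `f ρr / ρr ≤ f ρl / ρl`, so the condition says that
`ρ ↦ f ρ / ρ` is nonincreasing. For the piecewise linear flux this quotient is `1` on the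
free-flow branch and `γ / ρ - γ` on the congested branch, which decreases and starts below `1`
because `γ (1 - ρm) < ρm`.
-/

open Set

lemma sub_div_sub_le_min_div {a b u v : ℝ} (ha : 0 < a) (hab : a < b) (h : v / b ≤ u / a) :
    (v - u) / (b - a) ≤ min (u / a) (v / b) := by
  have hb : 0 < b := ha.trans hab
  have hba : 0 < b - a := sub_pos.2 hab
  rw [div_le_div_iff₀ hb ha] at h
  refine le_min ?_ ?_
  · rw [div_le_div_iff₀ hba ha]
    linarith
  · rw [div_le_div_iff₀ hba hb]
    linarith

lemma piecewise_flux_div_antitoneOn {ρm γ : ℝ} (hγ : 0 ≤ γ) (hγm : γ * (1 - ρm) ≤ ρm) :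
    AntitoneOn (fun ρ => (if ρ < ρm then ρ else γ * (1 - ρ)) / ρ) (Ioi 0) := by
  intro a (ha : 0 < a) b (hb : 0 < b) hab
  by_cases hbm : b < ρm
  · simp only [if_pos hbm, if_pos (hab.trans_lt hbm), div_self ha.ne', div_self hb.ne', le_refl]
  by_cases ham : a < ρm
  · simp only [if_pos ham, if_neg hbm, div_self ha.ne']
    rw [div_le_one hb]
    calc γ * (1 - b) ≤ γ * (1 - ρm) := mul_le_mul_of_nonneg_left (by linarith) hγ
      _ ≤ b := by linarith
  · simp only [if_neg ham, if_neg hbm]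
    rw [div_le_div_iff₀ hb ha]
    nlinarith [mul_le_mul_of_nonneg_left hab hγ]

theorem stmt_2_general (ρm γ : ℝ) (hρm1 : ρm < 1)
    (hγ : 0 < γ) (hγ' : γ < ρm / (1 - ρm))
    (f : ℝ → ℝ) (hf : ∀ ρ, f ρ = if ρ < ρm then ρ else γ * (1 - ρ)) :
    ∀ ρl ρr : ℝ, 0 < ρl → ρl < ρr → ρr ≤ 1 →
      min (f ρl / ρl) (f ρr / ρr) ≥ (f ρr - f ρl) / (ρr - ρl) := by
  intro ρl ρr hl hlr _
  have hγm : γ * (1 - ρm) ≤ ρm := ((lt_div_iff₀ (sub_pos.2 hρm1)).1 hγ').le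
  obtain rfl : f = fun ρ => if ρ < ρm then ρ else γ * (1 - ρ) := funext hf
  exact sub_div_sub_le_min_div hl hlr
    (piecewise_flux_div_antitoneOn hγ.le hγm hl (hl.trans hlr) hlr.le)

theorem stmt_2 (ρm γ : ℝ) (hρm : 0 < ρm) (hρm1 : ρm < 1)
    (hγ : 0 < γ) (hγ' : γ < ρm / (1 - ρm))
    (f : ℝ → ℝ) (hf : ∀ ρ, f ρ = if ρ < ρm then ρ else γ * (1 - ρ)) :
    ∀ ρl ρr : ℝ, 0 < ρl → ρl < ρr → ρr ≤ 1 →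
      min (f ρl / ρl) (f ρr / ρr) ≥ (f ρr - f ρl) / (ρr - ρl) :=
  stmt_2_general ρm γ hρm1 hγ hγ' f hf
end

section
/- Define the quartic P(y) = −y⁴/ε² + 3y² + M·y − ε² with M > 0 fixed. Then for all sufficiently small ε > 0, P has exactly one root in the interval [−ε, ε], and this root equals ε²/M + O(ε³); moreover P(y) < 0 for y ∈ [−ε, ε] below the root and P(y) > 0 above it. -/
/-!
On `[-ε, ε]` the quartic term `-y⁴/ε²` has slope at most `4ε` in absolute value, so for small `ε`
the slope of `P` is at least `M - 10ε > 0` and `P` is strictly increasing there. Since `P` is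
negative at `ε²/M - ε³` and positive at `ε²/M`, the intermediate value theorem puts a root between
these two points, and monotonicity makes it the only root and gives the sign pattern.
-/

open Set

noncomputable def quartic (M ε y : ℝ) : ℝ := -(1 / ε ^ 2) * y ^ 4 + 3 * y ^ 2 + M * y - ε ^ 2

theorem quartic_sub_quartic (M : ℝ) {ε : ℝ} (hε : ε ≠ 0) (y z : ℝ) :
    quartic M ε z - quartic M ε y =
      (z - y) * (M + 3 * (z + y) - (z + y) * (z ^ 2 + y ^ 2) / ε ^ 2) := by
  unfold quartic
  field_simp
  ring

theorem quartic_strictMonoOn {M ε : ℝ} (hε : 0 < ε) (hεM : 10 * ε < M) :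
    StrictMonoOn (quartic M ε) (Icc (-ε) ε) := by
  rintro y ⟨hy₁, hy₂⟩ z ⟨hz₁, hz₂⟩ hyz
  have hsum : |z + y| ≤ 2 * ε := abs_le.2 ⟨by linarith, by linarith⟩
  have hsq : z ^ 2 + y ^ 2 ≤ 2 * ε ^ 2 := by nlinarith
  have hcubic : (z + y) * (z ^ 2 + y ^ 2) / ε ^ 2 ≤ 4 * ε := by
    rw [div_le_iff₀ (by positivity)]
    calc (z + y) * (z ^ 2 + y ^ 2) ≤ |z + y| * (z ^ 2 + y ^ 2) := by
          gcongr; exact le_abs_self _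
      _ ≤ 2 * ε * (2 * ε ^ 2) := by gcongr
      _ = 4 * ε * ε ^ 2 := by ring
  have hfactor : 0 < M + 3 * (z + y) - (z + y) * (z ^ 2 + y ^ 2) / ε ^ 2 := by linarith
  rw [← sub_pos, quartic_sub_quartic M hε.ne']
  exact mul_pos (sub_pos.2 hyz) hfactor

theorem quartic_sq_div_pos {M ε : ℝ} (hε : 0 < ε) (hεM : ε < M) :
    0 < quartic M ε (ε ^ 2 / M) := by
  have hM : 0 < M := hε.trans hεM
  have : quartic M ε (ε ^ 2 / M) = ε ^ 4 * (3 * M ^ 2 - ε ^ 2) / M ^ 4 := by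
    unfold quartic; field_simp; ring
  rw [this]
  have : ε ^ 2 < M ^ 2 := by gcongr
  have : 0 < 3 * M ^ 2 - ε ^ 2 := by nlinarith
  positivity

theorem sq_div_sub_cube_nonneg {M ε : ℝ} (hM : 0 < M) (hMε : M * ε ≤ 1) :
    0 ≤ ε ^ 2 / M - ε ^ 3 := by
  have : ε ^ 3 * M ≤ ε ^ 2 := by nlinarith [sq_nonneg ε]
  rwa [sub_nonneg, le_div_iff₀ hM]

theorem quartic_sq_div_sub_cube_neg {M ε : ℝ} (hε : 0 < ε) (hM : 0 < M) (hMε : M * ε < 1)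
    (hεM : 3 * ε < M ^ 3) :
    quartic M ε (ε ^ 2 / M - ε ^ 3) < 0 := by
  set y := ε ^ 2 / M - ε ^ 3
  have hy₀ : 0 ≤ y := sq_div_sub_cube_nonneg hM hMε.le
  have hy₁ : y ≤ ε ^ 2 / M := by simp only [y]; linarith [pow_pos hε 3]
  have hlin : M * y = ε ^ 2 - M * ε ^ 3 := by simp only [y]; field_simp
  have hsq : 3 * y ^ 2 < M * ε ^ 3 := by
    calc 3 * y ^ 2 ≤ 3 * (ε ^ 2 / M) ^ 2 := by gcongr
      _ = 3 * ε * ε ^ 3 / M ^ 2 := by ring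
      _ < M * ε ^ 3 := by
        rw [div_lt_iff₀ (by positivity)]
        nlinarith [pow_pos hε 3]
  have : 0 ≤ 1 / ε ^ 2 * y ^ 4 := by positivity
  unfold quartic
  linarith

theorem stmt_9 (M : ℝ) (hM : 0 < M)
    (P : ℝ → ℝ → ℝ)
    (hP : ∀ ε y, P ε y = -(1 / ε ^ 2) * y ^ 4 + 3 * y ^ 2 + M * y - ε ^ 2) :
    ∃ Cr > 0, ∃ ε0 > 0, ∀ ε : ℝ, 0 < ε → ε < ε0 →
      ∃! y : ℝ, y ∈ Set.Icc (-ε) ε ∧ P ε y = 0 ∧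
        |y - ε ^ 2 / M| ≤ Cr * ε ^ 3 ∧
        (∀ z ∈ Set.Icc (-ε) ε, z < y → P ε z < 0) ∧
        (∀ z ∈ Set.Icc (-ε) ε, y < z → 0 < P ε z) := by
  obtain rfl : P = quartic M := funext₂ hP
  refine ⟨1, one_pos, min (M / 10) (min (1 / M) (M ^ 3 / 3)), by positivity, fun ε hε hε₀ => ?_⟩
  obtain ⟨h10, hinv, hcube⟩ : 10 * ε < M ∧ M * ε < 1 ∧ 3 * ε < M ^ 3 := by
    simp only [lt_min_iff, lt_div_iff₀ hM, lt_div_iff₀ (by norm_num : (0 : ℝ) < 10),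
      lt_div_iff₀ (by norm_num : (0 : ℝ) < 3)] at hε₀
    refine ⟨?_, ?_, ?_⟩ <;> linarith
  have hmono := quartic_strictMonoOn hε h10
  have hlo := quartic_sq_div_sub_cube_neg hε hM hinv hcube
  have hhi := quartic_sq_div_pos hε (show ε < M by linarith)
  have hbracket : Icc (ε ^ 2 / M - ε ^ 3) (ε ^ 2 / M) ⊆ Icc (-ε) ε := by
    have : ε ^ 2 / M ≤ ε := by rw [div_le_iff₀ hM]; nlinarith
    exact Icc_subset_Icc (by linarith [sq_div_sub_cube_nonneg hM hinv.le]) this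
  have hcont : Continuous (quartic M ε) := by unfold quartic; fun_prop
  obtain ⟨y, hyb, hy0⟩ := intermediate_value_Icc (by linarith [pow_pos hε 3])
    hcont.continuousOn ⟨hlo.le, hhi.le⟩
  have hyI := hbracket hyb
  refine ⟨y, ⟨hyI, hy0, ?_, fun z hz hzy => hy0 ▸ hmono hz hyI hzy,
    fun z hz hyz => hy0 ▸ hmono hyI hz hyz⟩, ?_⟩
  · rw [abs_le]; constructor <;> linarith [hyb.1, hyb.2]
  · rintro y' ⟨hy'I, hy'0, -⟩
    exact hmono.injOn hy'I hyI (hy'0.trans hy0.symm)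
end

section
/- In Case B (γ/(γ+1) < ρ_l < ρ_m), the shock speed s = (g_c(ρ_m) − f(ρ_l))/(ρ_m − ρ_l) = (γ(1−ρ_m) − ρ_l)/(ρ_m − ρ_l) is strictly negative, and moreover s < −γ so the 1-shock is slower than the 2-contact of speed −γ. -/
/-
Clearing the positive denominator ρ_m − ρ_l, the inequality s < −γ becomes γ < ρ_l (γ + 1),
which is the Case B assumption γ/(γ+1) < ρ_l; and −γ < 0.
-/

theorem shock_speed_lt_neg_iff {γ ρl ρm : ℝ} (hl : ρl < ρm) :
    (γ * (1 - ρm) - ρl) / (ρm - ρl) < -γ ↔ γ < ρl * (γ + 1) := by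
  rw [div_lt_iff₀ (sub_pos.2 hl)]
  constructor <;> intro h <;> linarith

theorem stmt_12_general (ρm γ ρl : ℝ) (hγ : 0 < γ)
    (hl : γ / (γ + 1) < ρl) (hl' : ρl < ρm) :
    (γ * (1 - ρm) - ρl) / (ρm - ρl) < 0 ∧
    (γ * (1 - ρm) - ρl) / (ρm - ρl) < -γ := by
  have hs : (γ * (1 - ρm) - ρl) / (ρm - ρl) < -γ :=
    (shock_speed_lt_neg_iff hl').2 ((div_lt_iff₀ (by linarith)).1 hl)
  exact ⟨hs.trans (neg_neg_of_pos hγ), hs⟩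

theorem stmt_12 (ρm γ ρl : ℝ) (hρm : 0 < ρm) (hρm1 : ρm < 1)
    (hγ : 0 < γ) (hγ' : γ < ρm / (1 - ρm))
    (hl : γ / (γ + 1) < ρl) (hl' : ρl < ρm) :
    (γ * (1 - ρm) - ρl) / (ρm - ρl) < 0 ∧
    (γ * (1 - ρm) - ρl) / (ρm - ρl) < -γ :=
  stmt_12_general ρm γ ρl hγ hl hl'
end

section
/- Let φ : (0,∞) → (0,∞) with φ(ε) = o(ε) as ε → 0. Then ∫_{ρ_m−ε}^{ρ_m−ε+φ(ε)} η_ε(s−ρ_m) ds ≤ φ(ε)·η_ε(φ(ε)−ε) = O(φ(ε)/ε·η((φ(ε)−ε)/ε)) → 0 as ε → 0; consequently f_ε(ρ_m − ε + φ(ε)) → ρ_m as ε → 0. -/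
/-!
On `[ρm - ε, ρm]` the rescaled mollifier `s ↦ η_ε(s - ρm)` is nondecreasing, so once `φ ε ≤ ε`
its integral over `[ρm - ε, ρm - ε + φ ε]` is at most the length `φ ε` times the value at the right
endpoint, i.e. `(φ ε / ε) · η (φ ε / ε - 1)`, which tends to `0 · η (-1) = 0`. Since also
`ρm - ε + φ ε → ρm`, the value `f_ε (ρm - ε + φ ε)` tends to `ρm`.
-/

open intervalIntegral Filter Topology Set

theorem MonotoneOn.intervalIntegral_le_sub_mul {f : ℝ → ℝ} {a b : ℝ} (hab : a ≤ b)
    (hf : MonotoneOn f (Icc a b)) : ∫ x in a..b, f x ≤ (b - a) * f b :=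
  calc ∫ x in a..b, f x ≤ ∫ _ in a..b, f b :=
        integral_mono_on hab (MonotoneOn.intervalIntegrable (by rwa [uIcc_of_le hab]))
          intervalIntegrable_const fun x hx => hf hx (right_mem_Icc.2 hab) hx.2
    _ = (b - a) * f b := by rw [integral_const, smul_eq_mul]

theorem MonotoneOn.rescale {η : ℝ → ℝ} (hη : MonotoneOn η (Icc (-1) 0)) {ε : ℝ} (hε : 0 < ε)
    (c : ℝ) : MonotoneOn (fun s => 1 / ε * η ((s - c) / ε)) (Icc (c - ε) c) := by
  have mem : ∀ s ∈ Icc (c - ε) c, (s - c) / ε ∈ Icc (-1 : ℝ) 0 := fun s hs =>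
    ⟨by rw [le_div_iff₀ hε]; linarith [hs.1], div_nonpos_of_nonpos_of_nonneg (by linarith [hs.2]) hε.le⟩
  intro x hx y hy hxy
  exact mul_le_mul_of_nonneg_left (hη (mem x hx) (mem y hy) (by gcongr)) (by positivity)

theorem integral_rescale_le {η : ℝ → ℝ} (hη : MonotoneOn η (Icc (-1) 0)) {ε t : ℝ} (hε : 0 < ε)
    (ht : 0 ≤ t) (htε : t ≤ ε) (c : ℝ) :
    ∫ s in (c - ε)..(c - ε + t), 1 / ε * η ((s - c) / ε) ≤ t * (1 / ε * η ((t - ε) / ε)) := by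
  have h := ((hη.rescale hε c).mono (Icc_subset_Icc le_rfl (by linarith))).intervalIntegral_le_sub_mul
    (le_add_of_nonneg_right ht)
  rwa [add_sub_cancel_left, show c - ε + t - c = t - ε by ring] at h

theorem eventually_pos_and_le_of_div_tendsto_zero {φ : ℝ → ℝ}
    (hφ : Tendsto (fun ε => φ ε / ε) (𝓝[>] 0) (𝓝 0)) : ∀ᶠ ε in 𝓝[>] 0, 0 < ε ∧ φ ε ≤ ε := by
  filter_upwards [self_mem_nhdsWithin, hφ.eventually (gt_mem_nhds one_pos)] with ε hε h
  exact ⟨hε, ((div_lt_one hε).1 h).le⟩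

theorem tendsto_zero_of_div_tendsto_zero {φ : ℝ → ℝ}
    (hφ : Tendsto (fun ε => φ ε / ε) (𝓝[>] 0) (𝓝 0)) : Tendsto φ (𝓝[>] 0) (𝓝 0) := by
  have h := hφ.mul (tendsto_id.mono_left nhdsWithin_le_nhds)
  rw [mul_zero] at h
  refine h.congr' ?_
  filter_upwards [self_mem_nhdsWithin] with ε (hε : 0 < ε)
  exact div_mul_cancel₀ _ hε.ne'

theorem tendsto_mul_rescale_sub_of_div_tendsto_zero {η φ : ℝ → ℝ} (hη : Continuous η)
    (hφ : Tendsto (fun ε => φ ε / ε) (𝓝[>] 0) (𝓝 0)) :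
    Tendsto (fun ε => φ ε * (1 / ε * η ((φ ε - ε) / ε))) (𝓝[>] 0) (𝓝 0) := by
  have h : Tendsto (fun t => t * η (t - 1)) (𝓝 0) (𝓝 0) := by
    have hc : Continuous fun t : ℝ => t * η (t - 1) := by fun_prop
    simpa using hc.tendsto 0
  refine (h.comp hφ).congr' ?_
  filter_upwards [self_mem_nhdsWithin] with ε (hε : 0 < ε)
  simp only [Function.comp_apply, sub_div, div_self hε.ne']
  ring

theorem stmt_18_general (ρm γ : ℝ)
    (η : ℝ → ℝ)
    (hnn : ∀ s, 0 ≤ η s)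
    (hcont : Continuous η)
    (hmono : MonotoneOn η (Set.Icc (-1 : ℝ) 0))
    (ηε : ℝ → ℝ → ℝ) (hηε : ∀ ε s, ηε ε s = (1 / ε) * η (s / ε))
    (fε : ℝ → ℝ → ℝ)
    (hfε : ∀ ε ρ, fε ε ρ = ρ + (γ - (γ + 1) * ρ) * ∫ s in (ρm - ε)..ρ, ηε ε (s - ρm))
    (φ : ℝ → ℝ) (hφpos : ∀ ε : ℝ, 0 < ε → 0 < φ ε)
    (hφo : Tendsto (fun ε => φ ε / ε) (nhdsWithin 0 (Set.Ioi 0)) (nhds 0)) :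
    (∀ᶠ ε in nhdsWithin 0 (Set.Ioi 0),
      (∫ s in (ρm - ε)..(ρm - ε + φ ε), ηε ε (s - ρm)) ≤ φ ε * ηε ε (φ ε - ε)) ∧
    Tendsto (fun ε => ∫ s in (ρm - ε)..(ρm - ε + φ ε), ηε ε (s - ρm))
      (nhdsWithin 0 (Set.Ioi 0)) (nhds 0) ∧
    Tendsto (fun ε => fε ε (ρm - ε + φ ε)) (nhdsWithin 0 (Set.Ioi 0)) (nhds ρm) := by
  obtain rfl : ηε = fun ε s => 1 / ε * η (s / ε) := funext₂ hηε
  obtain rfl : fε = fun ε ρ => ρ + (γ - (γ + 1) * ρ) *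
      ∫ s in (ρm - ε)..ρ, 1 / ε * η ((s - ρm) / ε) := funext₂ hfε
  have hbound := (eventually_pos_and_le_of_div_tendsto_zero hφo).mono fun ε ⟨hε, hφε⟩ =>
    integral_rescale_le hmono hε (hφpos ε hε).le hφε ρm
  have hnonneg : ∀ᶠ ε in 𝓝[>] 0, 0 ≤ ∫ s in (ρm - ε)..(ρm - ε + φ ε), 1 / ε * η ((s - ρm) / ε) := by
    filter_upwards [self_mem_nhdsWithin] with ε (hε : 0 < ε)
    exact integral_nonneg (le_add_of_nonneg_right (hφpos ε hε).le) fun s _ =>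
      mul_nonneg (by positivity) (hnn _)
  have hI := tendsto_of_tendsto_of_tendsto_of_le_of_le' tendsto_const_nhds
    (tendsto_mul_rescale_sub_of_div_tendsto_zero hcont hφo) hnonneg hbound
  refine ⟨hbound, hI, ?_⟩
  have hx : Tendsto (fun ε => ρm - ε + φ ε) (𝓝[>] 0) (𝓝 ρm) := by
    simpa using (tendsto_const_nhds.sub (tendsto_id.mono_left nhdsWithin_le_nhds)).add
      (tendsto_zero_of_div_tendsto_zero hφo)
  simpa using hx.add ((tendsto_const_nhds.sub (tendsto_const_nhds.mul hx)).mul hI)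

theorem stmt_18 (ρm γ : ℝ) (hρm : 0 < ρm) (hρm1 : ρm < 1) (hγ : 0 < γ)
    (η : ℝ → ℝ)
    (hnn : ∀ s, 0 ≤ η s)
    (hcont : Continuous η)
    (hsupp : ∀ s : ℝ, 1 ≤ |s| → η s = 0)
    (hmono : MonotoneOn η (Set.Icc (-1 : ℝ) 0))
    (ηε : ℝ → ℝ → ℝ) (hηε : ∀ ε s, ηε ε s = (1 / ε) * η (s / ε))
    (fε : ℝ → ℝ → ℝ)
    (hfε : ∀ ε ρ, fε ε ρ = ρ + (γ - (γ + 1) * ρ) * ∫ s in (ρm - ε)..ρ, ηε ε (s - ρm))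
    (φ : ℝ → ℝ) (hφpos : ∀ ε : ℝ, 0 < ε → 0 < φ ε)
    (hφo : Tendsto (fun ε => φ ε / ε) (nhdsWithin 0 (Set.Ioi 0)) (nhds 0)) :
    (∀ᶠ ε in nhdsWithin 0 (Set.Ioi 0),
      (∫ s in (ρm - ε)..(ρm - ε + φ ε), ηε ε (s - ρm)) ≤ φ ε * ηε ε (φ ε - ε)) ∧
    Tendsto (fun ε => ∫ s in (ρm - ε)..(ρm - ε + φ ε), ηε ε (s - ρm))
      (nhdsWithin 0 (Set.Ioi 0)) (nhds 0) ∧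
    Tendsto (fun ε => fε ε (ρm - ε + φ ε)) (nhdsWithin 0 (Set.Ioi 0)) (nhds ρm) :=
  stmt_18_general ρm γ η hnn hcont hmono ηε hηε fε hfε φ hφpos hφo
end
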